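/- (n = 2 even factor.) For all real θ₁₀, θ₁₃, θ₄, θ₆, the matrix M₁ᵉ = P₍₂,₄₎ · exp((i·θ₁₀) • U₁₀) · exp((i·θ₁₃) • U₁₃) · exp((i·θ₄) • U₄) · exp((i·θ₆) • U₆) · P₍₂,₄₎ is 2×2-block-diagonal with SU(2) blocks. -/

import Mathlib

open Matrix Complex

noncomputable def U₁ : Matrix (Fin 4) (Fin 4) ℂ :=
  !![0, 1, 0, 0; 1, 0, 0, 0; 0, 0, 1, 0; 0, 0, 0, -1]

noncomputable def U₂ : Matrix (Fin 4) (Fin 4) ℂ :=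
  !![0, -I, 0, 0; I, 0, 0, 0; 0, 0, 1, 0; 0, 0, 0, -1]

noncomputable def U₃ : Matrix (Fin 4) (Fin 4) ℂ :=
  !![1, 0, 0, 0; 0, -1, 0, 0; 0, 0, 1, 0; 0, 0, 0, -1]

noncomputable def U₄ : Matrix (Fin 4) (Fin 4) ℂ :=
  !![1, 0, 0, 0; 0, 0, 1, 0; 0, 1, 0, 0; 0, 0, 0, -1]

noncomputable def U₅ : Matrix (Fin 4) (Fin 4) ℂ :=
  !![0, 0, 1, 0; 0, 1, 0, 0; 1, 0, 0, 0; 0, 0, 0, -1]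

noncomputable def U₆ : Matrix (Fin 4) (Fin 4) ℂ :=
  !![1, 0, 0, 0; 0, 0, -I, 0; 0, I, 0, 0; 0, 0, 0, -1]

noncomputable def U₇ : Matrix (Fin 4) (Fin 4) ℂ :=
  !![0, 0, -I, 0; 0, 1, 0, 0; I, 0, 0, 0; 0, 0, 0, -1]

noncomputable def U₈ : Matrix (Fin 4) (Fin 4) ℂ :=
  !![1, 0, 0, 0; 0, 1, 0, 0; 0, 0, -1, 0; 0, 0, 0, -1]

noncomputable def U₉ : Matrix (Fin 4) (Fin 4) ℂ :=
  !![1, 0, 0, 0; 0, -1, 0, 0; 0, 0, 0, 1; 0, 0, 1, 0]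

noncomputable def U₁₀ : Matrix (Fin 4) (Fin 4) ℂ :=
  !![0, 0, 0, 1; 0, -1, 0, 0; 0, 0, 1, 0; 1, 0, 0, 0]

noncomputable def U₁₁ : Matrix (Fin 4) (Fin 4) ℂ :=
  !![1, 0, 0, 0; 0, 0, 0, 1; 0, 0, -1, 0; 0, 1, 0, 0]

noncomputable def U₁₂ : Matrix (Fin 4) (Fin 4) ℂ :=
  !![1, 0, 0, 0; 0, -1, 0, 0; 0, 0, 0, -I; 0, 0, I, 0]

noncomputable def U₁₃ : Matrix (Fin 4) (Fin 4) ℂ :=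
  !![0, 0, 0, -I; 0, -1, 0, 0; 0, 0, 1, 0; I, 0, 0, 0]

noncomputable def U₁₄ : Matrix (Fin 4) (Fin 4) ℂ :=
  !![1, 0, 0, 0; 0, 0, 0, -I; 0, 0, -1, 0; 0, I, 0, 0]

noncomputable def U₁₅ : Matrix (Fin 4) (Fin 4) ℂ :=
  !![1, 0, 0, 0; 0, -1, 0, 0; 0, 0, -1, 0; 0, 0, 0, 1]

/-- 4×4 permutation matrix exchanging the 2nd and 4th standard basis vectors. -/
def P₂₄ : Matrix (Fin 4) (Fin 4) ℂ :=
  !![1, 0, 0, 0; 0, 0, 0, 1; 0, 0, 1, 0; 0, 1, 0, 0]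

/-- 4×4 permutation matrix exchanging the 2nd and 3rd standard basis vectors. -/
def P₂₃ : Matrix (Fin 4) (Fin 4) ℂ :=
  !![1, 0, 0, 0; 0, 0, 1, 0; 0, 1, 0, 0; 0, 0, 0, 1]

/-- The top-left 2×2 block of a 4×4 matrix. -/
noncomputable def topBlock (M : Matrix (Fin 4) (Fin 4) ℂ) : Matrix (Fin 2) (Fin 2) ℂ :=
  !![M 0 0, M 0 1; M 1 0, M 1 1]

/-- The bottom-right 2×2 block of a 4×4 matrix. -/
noncomputable def botBlock (M : Matrix (Fin 4) (Fin 4) ℂ) : Matrix (Fin 2) (Fin 2) ℂ :=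
  !![M 2 2, M 2 3; M 3 2, M 3 3]

/-- A 2×2 complex matrix is special unitary. -/
def IsSU2 (A : Matrix (Fin 2) (Fin 2) ℂ) : Prop :=
  A * Aᴴ = 1 ∧ Aᴴ * A = 1 ∧ A.det = 1

/-- A 4×4 complex matrix is 2×2-block-diagonal with SU(2) blocks: every entry whose
row index and column index lie on opposite sides of the 2|2 partition vanishes, and
both 2×2 diagonal blocks are unitary with determinant 1. -/
def IsBlockDiagSU2 (M : Matrix (Fin 4) (Fin 4) ℂ) : Prop :=
  (∀ i j : Fin 4,
      (((i : ℕ) < 2 ∧ ¬ (j : ℕ) < 2) ∨ (¬ (i : ℕ) < 2 ∧ (j : ℕ) < 2)) → M i j = 0) ∧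
  IsSU2 (topBlock M) ∧ IsSU2 (botBlock M)


attribute [local instance] Matrix.linftyOpNormedAddCommGroup Matrix.linftyOpNormedRing
  Matrix.linftyOpNormedAlgebra

set_option maxHeartbeats 1600000

lemma exp_invol (U : Matrix (Fin 4) (Fin 4) ℂ) (h : U * U = 1) (θ : ℝ) :
    NormedSpace.exp ((I * (θ : ℂ)) • U)
      = ((Real.cos θ : ℂ)) • (1 : Matrix (Fin 4) (Fin 4) ℂ) + (I * (Real.sin θ : ℂ)) • U := by
  set z : ℂ := I * (θ : ℂ) with hz
  have hexp : HasSum (fun n : ℕ => ((n.factorial : ℂ))⁻¹ • (z • U) ^ n)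
      (NormedSpace.exp (z • U)) := NormedSpace.exp_series_hasSum_exp' _
  have h1 : HasSum (fun n : ℕ => z ^ n / n.factorial) (Complex.exp z) := by
    rw [Complex.exp_eq_exp_ℂ]; exact NormedSpace.expSeries_div_hasSum_exp z
  have h2 : HasSum (fun n : ℕ => (-z) ^ n / n.factorial) (Complex.exp (-z)) := by
    rw [Complex.exp_eq_exp_ℂ]; exact NormedSpace.expSeries_div_hasSum_exp (-z)
  have hA : HasSum (fun n : ℕ => (z ^ n + (-z) ^ n) / (2 * n.factorial)) (Complex.cosh z) := by
    have := (h1.add h2).div_const 2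
    rw [Complex.cosh]
    convert this using 2 with n
    case e'_5 => ring
    case e'_3 => rfl
  have hB : HasSum (fun n : ℕ => (z ^ n - (-z) ^ n) / (2 * n.factorial)) (Complex.sinh z) := by
    have := (h1.sub h2).div_const 2
    rw [Complex.sinh]
    convert this using 2 with n
    case e'_5 => ring
    case e'_3 => rfl
  have hA' := hA.smul_const (1 : Matrix (Fin 4) (Fin 4) ℂ)
  have hB' := hB.smul_const U
  have hsum := hA'.add hB'
  have heq : (fun n : ℕ => ((z ^ n + (-z) ^ n) / (2 * n.factorial)) • (1 : Matrix (Fin 4) (Fin 4) ℂ)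
      + ((z ^ n - (-z) ^ n) / (2 * n.factorial)) • U)
      = fun n : ℕ => ((n.factorial : ℂ))⁻¹ • (z • U) ^ n := by
    funext n
    have hfac : (n.factorial : ℂ) ≠ 0 := Nat.cast_ne_zero.2 n.factorial_ne_zero
    rw [smul_pow]
    rcases Nat.even_or_odd n with he | ho
    · obtain ⟨k, hk⟩ := he
      have hUn : U ^ n = 1 := by
        rw [show n = 2 * k by omega, pow_mul, show U ^ 2 = 1 by rw [sq, h], one_pow]
      have hneg : (-z) ^ n = z ^ n := (Even.neg_pow ⟨k, hk⟩) z
      rw [hUn, hneg, sub_self, zero_div, zero_smul, add_zero, smul_smul]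
      congr 1
      field_simp
      ring
    · obtain ⟨k, hk⟩ := ho
      have hUn : U ^ n = U := by
        rw [hk, pow_succ, pow_mul, show U ^ 2 = 1 by rw [sq, h], one_pow, one_mul]
      have hneg : (-z) ^ n = -z ^ n := Odd.neg_pow ⟨k, hk⟩ z
      rw [hUn, hneg, add_neg_cancel, zero_div, zero_smul, zero_add, sub_neg_eq_add, smul_smul]
      congr 1
      field_simp
      ring
  rw [heq] at hsum
  have hval := hexp.unique hsum
  rw [hval]
  have hzc : z = (θ : ℂ) * I := by rw [hz, mul_comm]
  rw [hzc, Complex.cosh_mul_I, Complex.sinh_mul_I, Complex.ofReal_cos, Complex.ofReal_sin,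
    mul_comm I]

lemma su2_general (a b : ℂ) (h : a * star a + b * star b = 1) :
    IsSU2 !![a, b; -(star b), star a] := by
  simp only [Complex.star_def] at h
  refine ⟨?_, ?_, ?_⟩
  · ext i j
    fin_cases i <;> fin_cases j <;>
      simp [Matrix.mul_apply, Matrix.conjTranspose_apply, Fin.sum_univ_two, Matrix.one_apply,
        star_star, star_neg, Complex.star_def] <;>
      try first
      | linear_combination h
      | linear_combination -h
      | ring
  · ext i j
    fin_cases i <;> fin_cases j <;>
      simp [Matrix.mul_apply, Matrix.conjTranspose_apply, Fin.sum_univ_two, Matrix.one_apply,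
        star_star, star_neg, Complex.star_def] <;>
      try first
      | linear_combination h
      | linear_combination -h
      | ring
  · rw [Matrix.det_fin_two_of]
    simp only [Complex.star_def]
    linear_combination h

lemma su2_of_eq {A B : Matrix (Fin 2) (Fin 2) ℂ} (h : IsSU2 A) (e : B = A) : IsSU2 B := e ▸ h

lemma su2_mul {A B : Matrix (Fin 2) (Fin 2) ℂ} (hA : IsSU2 A) (hB : IsSU2 B) : IsSU2 (A * B) := by
  obtain ⟨hA1, hA2, hA3⟩ := hA
  obtain ⟨hB1, hB2, hB3⟩ := hB
  refine ⟨?_, ?_, ?_⟩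
  · rw [Matrix.conjTranspose_mul, Matrix.mul_assoc A B _, ← Matrix.mul_assoc B Bᴴ Aᴴ, hB1,
      Matrix.one_mul, hA1]
  · rw [Matrix.conjTranspose_mul, Matrix.mul_assoc Bᴴ Aᴴ _, ← Matrix.mul_assoc Aᴴ A B, hA2,
      Matrix.one_mul, hB2]
  · rw [Matrix.det_mul, hA3, hB3, one_mul]

lemma blockDiag_mul {M N : Matrix (Fin 4) (Fin 4) ℂ}
    (hM : IsBlockDiagSU2 M) (hN : IsBlockDiagSU2 N) : IsBlockDiagSU2 (M * N) := by
  obtain ⟨hM0, hMt, hMb⟩ := hM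
  obtain ⟨hN0, hNt, hNb⟩ := hN
  have hM02 : M 0 2 = 0 := hM0 0 2 (Or.inl ⟨by decide, by decide⟩)
  have hM03 : M 0 3 = 0 := hM0 0 3 (Or.inl ⟨by decide, by decide⟩)
  have hM12 : M 1 2 = 0 := hM0 1 2 (Or.inl ⟨by decide, by decide⟩)
  have hM13 : M 1 3 = 0 := hM0 1 3 (Or.inl ⟨by decide, by decide⟩)
  have hM20 : M 2 0 = 0 := hM0 2 0 (Or.inr ⟨by decide, by decide⟩)
  have hM21 : M 2 1 = 0 := hM0 2 1 (Or.inr ⟨by decide, by decide⟩)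
  have hM30 : M 3 0 = 0 := hM0 3 0 (Or.inr ⟨by decide, by decide⟩)
  have hM31 : M 3 1 = 0 := hM0 3 1 (Or.inr ⟨by decide, by decide⟩)
  have hN02 : N 0 2 = 0 := hN0 0 2 (Or.inl ⟨by decide, by decide⟩)
  have hN03 : N 0 3 = 0 := hN0 0 3 (Or.inl ⟨by decide, by decide⟩)
  have hN12 : N 1 2 = 0 := hN0 1 2 (Or.inl ⟨by decide, by decide⟩)
  have hN13 : N 1 3 = 0 := hN0 1 3 (Or.inl ⟨by decide, by decide⟩)
  have hN20 : N 2 0 = 0 := hN0 2 0 (Or.inr ⟨by decide, by decide⟩)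
  have hN21 : N 2 1 = 0 := hN0 2 1 (Or.inr ⟨by decide, by decide⟩)
  have hN30 : N 3 0 = 0 := hN0 3 0 (Or.inr ⟨by decide, by decide⟩)
  have hN31 : N 3 1 = 0 := hN0 3 1 (Or.inr ⟨by decide, by decide⟩)
  refine ⟨?_, ?_, ?_⟩
  · intro i j hij
    rw [Matrix.mul_apply, Fin.sum_univ_four]
    fin_cases i <;> fin_cases j <;> simp_all [Matrix.vecHead, Matrix.vecTail, -Complex.ofReal_cos, -Complex.ofReal_sin]
  · have ht : topBlock (M * N) = topBlock M * topBlock N := by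
      ext i j
      fin_cases i <;> fin_cases j <;>
        simp [topBlock, Matrix.mul_apply, Fin.sum_univ_four, Fin.sum_univ_two,
          hM02, hM03, hM12, hM13, hN20, hN21, hN30, hN31]
    rw [ht]
    exact su2_mul hMt hNt
  · have hb : botBlock (M * N) = botBlock M * botBlock N := by
      ext i j
      fin_cases i <;> fin_cases j <;>
        simp [botBlock, Matrix.mul_apply, Fin.sum_univ_four, Fin.sum_univ_two,
          hM20, hM21, hM30, hM31, hN02, hN03, hN12, hN13]
    rw [hb]
    exact su2_mul hMb hNb

lemma P24_mul_P24 : P₂₄ * P₂₄ = 1 := by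
  ext i j
  fin_cases i <;> fin_cases j <;>
    simp [P₂₄, Matrix.mul_apply, Fin.sum_univ_four, Matrix.one_apply, Matrix.vecHead,
      Matrix.vecTail]

lemma U10_sq : U₁₀ * U₁₀ = 1 := by
  ext i j
  fin_cases i <;> fin_cases j <;>
    simp [U₁₀, Matrix.mul_apply, Fin.sum_univ_four, Matrix.one_apply, Matrix.vecHead,
      Matrix.vecTail, Complex.I_mul_I]

lemma U13_sq : U₁₃ * U₁₃ = 1 := by
  ext i j
  fin_cases i <;> fin_cases j <;>
    simp [U₁₃, Matrix.mul_apply, Fin.sum_univ_four, Matrix.one_apply, Matrix.vecHead,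
      Matrix.vecTail, Complex.I_mul_I]

lemma U4_sq : U₄ * U₄ = 1 := by
  ext i j
  fin_cases i <;> fin_cases j <;>
    simp [U₄, Matrix.mul_apply, Fin.sum_univ_four, Matrix.one_apply, Matrix.vecHead,
      Matrix.vecTail, Complex.I_mul_I]

lemma U6_sq : U₆ * U₆ = 1 := by
  ext i j
  fin_cases i <;> fin_cases j <;>
    simp [U₆, Matrix.mul_apply, Fin.sum_univ_four, Matrix.one_apply, Matrix.vecHead,
      Matrix.vecTail, Complex.I_mul_I]

lemma fact10 (θ : ℝ) :
    IsBlockDiagSU2 (P₂₄ * NormedSpace.exp ((I * (θ : ℂ)) • U₁₀) * P₂₄) := by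
  rw [exp_invol U₁₀ U10_sq θ]
  have key : (Real.sin θ : ℂ) ^ 2 + (Real.cos θ : ℂ) ^ 2 = 1 := by
    exact_mod_cast Real.sin_sq_add_cos_sq θ
  have hE : ((Real.cos θ : ℂ)) • (1 : Matrix (Fin 4) (Fin 4) ℂ) + (I * (Real.sin θ : ℂ)) • U₁₀
      = !![(Real.cos θ : ℂ), 0, 0, I * (Real.sin θ : ℂ); 0, (Real.cos θ : ℂ) - (I * (Real.sin θ : ℂ)), 0, 0; 0, 0, (Real.cos θ : ℂ) + (I * (Real.sin θ : ℂ)), 0; I * (Real.sin θ : ℂ), 0, 0, (Real.cos θ : ℂ)] := by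
    ext i j
    fin_cases i <;> fin_cases j <;>
      simp [U₁₀, Matrix.one_apply, Matrix.vecHead, Matrix.vecTail, -Complex.ofReal_cos, -Complex.ofReal_sin] <;>
      try first
      | ring1
      | linear_combination (Real.sin θ : ℂ) * Complex.I_sq
      | linear_combination -(Real.sin θ : ℂ) * Complex.I_sq
  have hM : P₂₄ * !![(Real.cos θ : ℂ), 0, 0, I * (Real.sin θ : ℂ); 0, (Real.cos θ : ℂ) - (I * (Real.sin θ : ℂ)), 0, 0; 0, 0, (Real.cos θ : ℂ) + (I * (Real.sin θ : ℂ)), 0; I * (Real.sin θ : ℂ), 0, 0, (Real.cos θ : ℂ)] * P₂₄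
      = !![(Real.cos θ : ℂ), I * (Real.sin θ : ℂ), 0, 0; I * (Real.sin θ : ℂ), (Real.cos θ : ℂ), 0, 0; 0, 0, (Real.cos θ : ℂ) + (I * (Real.sin θ : ℂ)), 0; 0, 0, 0, (Real.cos θ : ℂ) - (I * (Real.sin θ : ℂ))] := by
    ext i j
    fin_cases i <;> fin_cases j <;>
      simp [P₂₄, Matrix.mul_apply, Fin.sum_univ_four, Matrix.vecHead, Matrix.vecTail]
  rw [hE, hM]
  refine ⟨?_, ?_, ?_⟩
  · intro i j hij
    fin_cases i <;> fin_cases j <;> simp_all [Matrix.vecHead, Matrix.vecTail, -Complex.ofReal_cos, -Complex.ofReal_sin]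
  · refine su2_of_eq (su2_general (Real.cos θ : ℂ) (I * (Real.sin θ : ℂ)) ?_) ?_
    · simp only [Complex.star_def, _root_.map_mul, _root_.map_add, _root_.map_sub, _root_.map_neg, _root_.map_zero, Complex.conj_I,
        Complex.conj_ofReal, mul_zero, add_zero]
      try first
      | linear_combination key
      | linear_combination key - (Real.sin θ : ℂ) ^ 2 * Complex.I_sq
      | linear_combination -key
      | ring
    · ext i j
      fin_cases i <;> fin_cases j <;>
        simp [topBlock, Complex.star_def, _root_.map_mul, Complex.conj_I, Complex.conj_ofReal,
          Matrix.vecHead, Matrix.vecTail, -Complex.ofReal_cos, -Complex.ofReal_sin] <;>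
      try first
      | ring1
      | linear_combination (Real.sin θ : ℂ) * Complex.I_sq
      | linear_combination -(Real.sin θ : ℂ) * Complex.I_sq
  · refine su2_of_eq (su2_general ((Real.cos θ : ℂ) + (I * (Real.sin θ : ℂ))) (0 : ℂ) ?_) ?_
    · simp only [Complex.star_def, _root_.map_mul, _root_.map_add, _root_.map_sub, _root_.map_neg, _root_.map_zero, Complex.conj_I,
        Complex.conj_ofReal, mul_zero, add_zero]
      try first
      | linear_combination key
      | linear_combination key - (Real.sin θ : ℂ) ^ 2 * Complex.I_sq
      | linear_combination -key
      | ring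
    · ext i j
      fin_cases i <;> fin_cases j <;>
        simp [botBlock, Complex.star_def, _root_.map_mul, Complex.conj_I, Complex.conj_ofReal,
          Matrix.vecHead, Matrix.vecTail, -Complex.ofReal_cos, -Complex.ofReal_sin] <;>
      try first
      | ring1
      | linear_combination (Real.sin θ : ℂ) * Complex.I_sq
      | linear_combination -(Real.sin θ : ℂ) * Complex.I_sq

lemma fact13 (θ : ℝ) :
    IsBlockDiagSU2 (P₂₄ * NormedSpace.exp ((I * (θ : ℂ)) • U₁₃) * P₂₄) := by
  rw [exp_invol U₁₃ U13_sq θ]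
  have key : (Real.sin θ : ℂ) ^ 2 + (Real.cos θ : ℂ) ^ 2 = 1 := by
    exact_mod_cast Real.sin_sq_add_cos_sq θ
  have hE : ((Real.cos θ : ℂ)) • (1 : Matrix (Fin 4) (Fin 4) ℂ) + (I * (Real.sin θ : ℂ)) • U₁₃
      = !![(Real.cos θ : ℂ), 0, 0, (Real.sin θ : ℂ); 0, (Real.cos θ : ℂ) - (I * (Real.sin θ : ℂ)), 0, 0; 0, 0, (Real.cos θ : ℂ) + (I * (Real.sin θ : ℂ)), 0; -(Real.sin θ : ℂ), 0, 0, (Real.cos θ : ℂ)] := by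
    ext i j
    fin_cases i <;> fin_cases j <;>
      simp [U₁₃, Matrix.one_apply, Matrix.vecHead, Matrix.vecTail, -Complex.ofReal_cos, -Complex.ofReal_sin] <;>
      try first
      | ring1
      | linear_combination (Real.sin θ : ℂ) * Complex.I_sq
      | linear_combination -(Real.sin θ : ℂ) * Complex.I_sq
  have hM : P₂₄ * !![(Real.cos θ : ℂ), 0, 0, (Real.sin θ : ℂ); 0, (Real.cos θ : ℂ) - (I * (Real.sin θ : ℂ)), 0, 0; 0, 0, (Real.cos θ : ℂ) + (I * (Real.sin θ : ℂ)), 0; -(Real.sin θ : ℂ), 0, 0, (Real.cos θ : ℂ)] * P₂₄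
      = !![(Real.cos θ : ℂ), (Real.sin θ : ℂ), 0, 0; -(Real.sin θ : ℂ), (Real.cos θ : ℂ), 0, 0; 0, 0, (Real.cos θ : ℂ) + (I * (Real.sin θ : ℂ)), 0; 0, 0, 0, (Real.cos θ : ℂ) - (I * (Real.sin θ : ℂ))] := by
    ext i j
    fin_cases i <;> fin_cases j <;>
      simp [P₂₄, Matrix.mul_apply, Fin.sum_univ_four, Matrix.vecHead, Matrix.vecTail]
  rw [hE, hM]
  refine ⟨?_, ?_, ?_⟩
  · intro i j hij
    fin_cases i <;> fin_cases j <;> simp_all [Matrix.vecHead, Matrix.vecTail, -Complex.ofReal_cos, -Complex.ofReal_sin]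
  · refine su2_of_eq (su2_general (Real.cos θ : ℂ) (Real.sin θ : ℂ) ?_) ?_
    · simp only [Complex.star_def, _root_.map_mul, _root_.map_add, _root_.map_sub, _root_.map_neg, _root_.map_zero, Complex.conj_I,
        Complex.conj_ofReal, mul_zero, add_zero]
      try first
      | linear_combination key
      | linear_combination key - (Real.sin θ : ℂ) ^ 2 * Complex.I_sq
      | linear_combination -key
      | ring
    · ext i j
      fin_cases i <;> fin_cases j <;>
        simp [topBlock, Complex.star_def, _root_.map_mul, Complex.conj_I, Complex.conj_ofReal,
          Matrix.vecHead, Matrix.vecTail, -Complex.ofReal_cos, -Complex.ofReal_sin] <;>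
      try first
      | ring1
      | linear_combination (Real.sin θ : ℂ) * Complex.I_sq
      | linear_combination -(Real.sin θ : ℂ) * Complex.I_sq
  · refine su2_of_eq (su2_general ((Real.cos θ : ℂ) + (I * (Real.sin θ : ℂ))) (0 : ℂ) ?_) ?_
    · simp only [Complex.star_def, _root_.map_mul, _root_.map_add, _root_.map_sub, _root_.map_neg, _root_.map_zero, Complex.conj_I,
        Complex.conj_ofReal, mul_zero, add_zero]
      try first
      | linear_combination key
      | linear_combination key - (Real.sin θ : ℂ) ^ 2 * Complex.I_sq
      | linear_combination -key
      | ring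
    · ext i j
      fin_cases i <;> fin_cases j <;>
        simp [botBlock, Complex.star_def, _root_.map_mul, Complex.conj_I, Complex.conj_ofReal,
          Matrix.vecHead, Matrix.vecTail, -Complex.ofReal_cos, -Complex.ofReal_sin] <;>
      try first
      | ring1
      | linear_combination (Real.sin θ : ℂ) * Complex.I_sq
      | linear_combination -(Real.sin θ : ℂ) * Complex.I_sq

lemma fact4 (θ : ℝ) :
    IsBlockDiagSU2 (P₂₄ * NormedSpace.exp ((I * (θ : ℂ)) • U₄) * P₂₄) := by
  rw [exp_invol U₄ U4_sq θ]
  have key : (Real.sin θ : ℂ) ^ 2 + (Real.cos θ : ℂ) ^ 2 = 1 := by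
    exact_mod_cast Real.sin_sq_add_cos_sq θ
  have hE : ((Real.cos θ : ℂ)) • (1 : Matrix (Fin 4) (Fin 4) ℂ) + (I * (Real.sin θ : ℂ)) • U₄
      = !![(Real.cos θ : ℂ) + (I * (Real.sin θ : ℂ)), 0, 0, 0; 0, (Real.cos θ : ℂ), I * (Real.sin θ : ℂ), 0; 0, I * (Real.sin θ : ℂ), (Real.cos θ : ℂ), 0; 0, 0, 0, (Real.cos θ : ℂ) - (I * (Real.sin θ : ℂ))] := by
    ext i j
    fin_cases i <;> fin_cases j <;>
      simp [U₄, Matrix.one_apply, Matrix.vecHead, Matrix.vecTail, -Complex.ofReal_cos, -Complex.ofReal_sin] <;>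
      try first
      | ring1
      | linear_combination (Real.sin θ : ℂ) * Complex.I_sq
      | linear_combination -(Real.sin θ : ℂ) * Complex.I_sq
  have hM : P₂₄ * !![(Real.cos θ : ℂ) + (I * (Real.sin θ : ℂ)), 0, 0, 0; 0, (Real.cos θ : ℂ), I * (Real.sin θ : ℂ), 0; 0, I * (Real.sin θ : ℂ), (Real.cos θ : ℂ), 0; 0, 0, 0, (Real.cos θ : ℂ) - (I * (Real.sin θ : ℂ))] * P₂₄
      = !![(Real.cos θ : ℂ) + (I * (Real.sin θ : ℂ)), 0, 0, 0; 0, (Real.cos θ : ℂ) - (I * (Real.sin θ : ℂ)), 0, 0; 0, 0, (Real.cos θ : ℂ), I * (Real.sin θ : ℂ); 0, 0, I * (Real.sin θ : ℂ), (Real.cos θ : ℂ)] := by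
    ext i j
    fin_cases i <;> fin_cases j <;>
      simp [P₂₄, Matrix.mul_apply, Fin.sum_univ_four, Matrix.vecHead, Matrix.vecTail]
  rw [hE, hM]
  refine ⟨?_, ?_, ?_⟩
  · intro i j hij
    fin_cases i <;> fin_cases j <;> simp_all [Matrix.vecHead, Matrix.vecTail, -Complex.ofReal_cos, -Complex.ofReal_sin]
  · refine su2_of_eq (su2_general ((Real.cos θ : ℂ) + (I * (Real.sin θ : ℂ))) (0 : ℂ) ?_) ?_
    · simp only [Complex.star_def, _root_.map_mul, _root_.map_add, _root_.map_sub, _root_.map_neg, _root_.map_zero, Complex.conj_I,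
        Complex.conj_ofReal, mul_zero, add_zero]
      try first
      | linear_combination key
      | linear_combination key - (Real.sin θ : ℂ) ^ 2 * Complex.I_sq
      | linear_combination -key
      | ring
    · ext i j
      fin_cases i <;> fin_cases j <;>
        simp [topBlock, Complex.star_def, _root_.map_mul, Complex.conj_I, Complex.conj_ofReal,
          Matrix.vecHead, Matrix.vecTail, -Complex.ofReal_cos, -Complex.ofReal_sin] <;>
      try first
      | ring1
      | linear_combination (Real.sin θ : ℂ) * Complex.I_sq
      | linear_combination -(Real.sin θ : ℂ) * Complex.I_sq
  · refine su2_of_eq (su2_general (Real.cos θ : ℂ) (I * (Real.sin θ : ℂ)) ?_) ?_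
    · simp only [Complex.star_def, _root_.map_mul, _root_.map_add, _root_.map_sub, _root_.map_neg, _root_.map_zero, Complex.conj_I,
        Complex.conj_ofReal, mul_zero, add_zero]
      try first
      | linear_combination key
      | linear_combination key - (Real.sin θ : ℂ) ^ 2 * Complex.I_sq
      | linear_combination -key
      | ring
    · ext i j
      fin_cases i <;> fin_cases j <;>
        simp [botBlock, Complex.star_def, _root_.map_mul, Complex.conj_I, Complex.conj_ofReal,
          Matrix.vecHead, Matrix.vecTail, -Complex.ofReal_cos, -Complex.ofReal_sin] <;>
      try first
      | ring1
      | linear_combination (Real.sin θ : ℂ) * Complex.I_sq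
      | linear_combination -(Real.sin θ : ℂ) * Complex.I_sq

lemma fact6 (θ : ℝ) :
    IsBlockDiagSU2 (P₂₄ * NormedSpace.exp ((I * (θ : ℂ)) • U₆) * P₂₄) := by
  rw [exp_invol U₆ U6_sq θ]
  have key : (Real.sin θ : ℂ) ^ 2 + (Real.cos θ : ℂ) ^ 2 = 1 := by
    exact_mod_cast Real.sin_sq_add_cos_sq θ
  have hE : ((Real.cos θ : ℂ)) • (1 : Matrix (Fin 4) (Fin 4) ℂ) + (I * (Real.sin θ : ℂ)) • U₆
      = !![(Real.cos θ : ℂ) + (I * (Real.sin θ : ℂ)), 0, 0, 0; 0, (Real.cos θ : ℂ), (Real.sin θ : ℂ), 0; 0, -(Real.sin θ : ℂ), (Real.cos θ : ℂ), 0; 0, 0, 0, (Real.cos θ : ℂ) - (I * (Real.sin θ : ℂ))] := by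
    ext i j
    fin_cases i <;> fin_cases j <;>
      simp [U₆, Matrix.one_apply, Matrix.vecHead, Matrix.vecTail, -Complex.ofReal_cos, -Complex.ofReal_sin] <;>
      try first
      | ring1
      | linear_combination (Real.sin θ : ℂ) * Complex.I_sq
      | linear_combination -(Real.sin θ : ℂ) * Complex.I_sq
  have hM : P₂₄ * !![(Real.cos θ : ℂ) + (I * (Real.sin θ : ℂ)), 0, 0, 0; 0, (Real.cos θ : ℂ), (Real.sin θ : ℂ), 0; 0, -(Real.sin θ : ℂ), (Real.cos θ : ℂ), 0; 0, 0, 0, (Real.cos θ : ℂ) - (I * (Real.sin θ : ℂ))] * P₂₄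
      = !![(Real.cos θ : ℂ) + (I * (Real.sin θ : ℂ)), 0, 0, 0; 0, (Real.cos θ : ℂ) - (I * (Real.sin θ : ℂ)), 0, 0; 0, 0, (Real.cos θ : ℂ), -(Real.sin θ : ℂ); 0, 0, (Real.sin θ : ℂ), (Real.cos θ : ℂ)] := by
    ext i j
    fin_cases i <;> fin_cases j <;>
      simp [P₂₄, Matrix.mul_apply, Fin.sum_univ_four, Matrix.vecHead, Matrix.vecTail]
  rw [hE, hM]
  refine ⟨?_, ?_, ?_⟩
  · intro i j hij
    fin_cases i <;> fin_cases j <;> simp_all [Matrix.vecHead, Matrix.vecTail, -Complex.ofReal_cos, -Complex.ofReal_sin]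
  · refine su2_of_eq (su2_general ((Real.cos θ : ℂ) + (I * (Real.sin θ : ℂ))) (0 : ℂ) ?_) ?_
    · simp only [Complex.star_def, _root_.map_mul, _root_.map_add, _root_.map_sub, _root_.map_neg, _root_.map_zero, Complex.conj_I,
        Complex.conj_ofReal, mul_zero, add_zero]
      try first
      | linear_combination key
      | linear_combination key - (Real.sin θ : ℂ) ^ 2 * Complex.I_sq
      | linear_combination -key
      | ring
    · ext i j
      fin_cases i <;> fin_cases j <;>
        simp [topBlock, Complex.star_def, _root_.map_mul, Complex.conj_I, Complex.conj_ofReal,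
          Matrix.vecHead, Matrix.vecTail, -Complex.ofReal_cos, -Complex.ofReal_sin] <;>
      try first
      | ring1
      | linear_combination (Real.sin θ : ℂ) * Complex.I_sq
      | linear_combination -(Real.sin θ : ℂ) * Complex.I_sq
  · refine su2_of_eq (su2_general (Real.cos θ : ℂ) (-(Real.sin θ : ℂ)) ?_) ?_
    · simp only [Complex.star_def, _root_.map_mul, _root_.map_add, _root_.map_sub, _root_.map_neg, _root_.map_zero, Complex.conj_I,
        Complex.conj_ofReal, mul_zero, add_zero]
      try first
      | linear_combination key
      | linear_combination key - (Real.sin θ : ℂ) ^ 2 * Complex.I_sq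
      | linear_combination -key
      | ring
    · ext i j
      fin_cases i <;> fin_cases j <;>
        simp [botBlock, Complex.star_def, _root_.map_mul, Complex.conj_I, Complex.conj_ofReal,
          Matrix.vecHead, Matrix.vecTail, -Complex.ofReal_cos, -Complex.ofReal_sin] <;>
      try first
      | ring1
      | linear_combination (Real.sin θ : ℂ) * Complex.I_sq
      | linear_combination -(Real.sin θ : ℂ) * Complex.I_sq
theorem M1_even_blockDiag_SU2 (θ₁₀ θ₁₃ θ₄ θ₆ : ℝ) :
    IsBlockDiagSU2
      (P₂₄ * NormedSpace.exp ((I * (θ₁₀ : ℂ)) • U₁₀)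
           * NormedSpace.exp ((I * (θ₁₃ : ℂ)) • U₁₃)
           * NormedSpace.exp ((I * (θ₄ : ℂ)) • U₄)
           * NormedSpace.exp ((I * (θ₆ : ℂ)) • U₆) * P₂₄) := by
  have hPP : ∀ X : Matrix (Fin 4) (Fin 4) ℂ, P₂₄ * (P₂₄ * X) = X := fun X => by
    rw [← Matrix.mul_assoc, P24_mul_P24, Matrix.one_mul]
  have hre : P₂₄ * NormedSpace.exp ((I * (θ₁₀ : ℂ)) • U₁₀)
        * NormedSpace.exp ((I * (θ₁₃ : ℂ)) • U₁₃)
        * NormedSpace.exp ((I * (θ₄ : ℂ)) • U₄)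
        * NormedSpace.exp ((I * (θ₆ : ℂ)) • U₆) * P₂₄
      = (P₂₄ * NormedSpace.exp ((I * (θ₁₀ : ℂ)) • U₁₀) * P₂₄)
        * ((P₂₄ * NormedSpace.exp ((I * (θ₁₃ : ℂ)) • U₁₃) * P₂₄)
        * ((P₂₄ * NormedSpace.exp ((I * (θ₄ : ℂ)) • U₄) * P₂₄)
        * (P₂₄ * NormedSpace.exp ((I * (θ₆ : ℂ)) • U₆) * P₂₄))) := by
    simp only [Matrix.mul_assoc, hPP]
  rw [hre]
  exact blockDiag_mul (fact10 θ₁₀)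
    (blockDiag_mul (fact13 θ₁₃) (blockDiag_mul (fact4 θ₄) (fact6 θ₆)))
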